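/- Let G be a connected graph without cut vertices that has a separation pair {u, v}, let C be a connected component of G - {u, v}, and let C' be the graph obtained from G[V(C) ∪ {u, v}] by adding the edge {u, v} if absent. Then C' is a topological minor of G. -/

import Mathlib

open SimpleGraph

variable {V : Type*}

/-- Reachability within the subgraph of `G` induced by the vertex set `W`. -/
def ReachIn (G : SimpleGraph V) (W : Set V) (x y : V) : Prop :=
  ∃ (hx : x ∈ W) (hy : y ∈ W), (G.induce W).Reachable ⟨x, hx⟩ ⟨y, hy⟩

/-- Removing `S` disconnects some connected component of `G`: there are two vertices
outside `S` that are connected in `G` but not in `G - S`. -/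
def Separates (G : SimpleGraph V) (S : Set V) : Prop :=
  ∃ u v : V, u ∉ S ∧ v ∉ S ∧ G.Reachable u v ∧ ¬ ReachIn G Sᶜ u v

/-- `S` is a minimal separator of `G`. -/
def IsMinimalSeparator (G : SimpleGraph V) (S : Set V) : Prop :=
  Separates G S ∧ ∀ S' ⊂ S, ¬ Separates G S'

/-- `C` is a connected component of the subgraph of `G` induced by `W`. -/
def IsCompOf (G : SimpleGraph V) (C W : Set V) : Prop :=
  C ⊆ W ∧ (G.induce C).Connected ∧ ∀ u ∈ C, ∀ v ∈ W, G.Adj u v → v ∈ C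

/-- A separation `(A, B)` of a graph `G`. -/
def IsSeparation (G : SimpleGraph V) (A B : Set V) : Prop :=
  A ∪ B = Set.univ ∧ ∀ u ∈ A \ B, ∀ v ∈ B \ A, ¬ G.Adj u v

/-- `(T, X)` is a tree decomposition of `G`. -/
structure IsTreeDecomp {ι : Type*} (G : SimpleGraph V) (T : SimpleGraph ι)
    (X : ι → Set V) : Prop where
  isTree : T.IsTree
  covers_verts : ∀ v : V, ∃ i, v ∈ X i
  covers_edges : ∀ ⦃u v : V⦄, G.Adj u v → ∃ i, u ∈ X i ∧ v ∈ X i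
  subtree : ∀ v : V, (T.induce {i | v ∈ X i}).Connected

/-- The tree decomposition given by the bag function `X` has adhesion at most `d`. -/
def AdhesionLE {ι : Type*} (T : SimpleGraph ι) (X : ι → Set V) (d : ℕ) : Prop :=
  ∀ ⦃i j : ι⦄, T.Adj i j → (X i ∩ X j).ncard ≤ d

/-- The torso of the vertex set `W` in `G`: the induced subgraph `G[W]` with an edge added
between each pair of vertices of `W` connected by a path internally avoiding `W`. -/
def torso (G : SimpleGraph V) (W : Set V) : SimpleGraph W :=
  SimpleGraph.fromRel (fun u v =>
    G.Adj u v ∨ ∃ p : G.Walk (u : V) (v : V), p.IsPath ∧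
      ∀ z ∈ p.support, z ≠ (u : V) → z ≠ (v : V) → z ∉ W)

/-- One smoothing step: `K` is obtained from `H` by replacing the degree-2 vertex `v`,
whose two neighbors are `a` and `b`, by a direct edge between `a` and `b`. -/
def SmoothStep (H K : SimpleGraph.Subgraph (⊤ : SimpleGraph V)) : Prop :=
  ∃ v a b : V, a ≠ b ∧ a ≠ v ∧ b ≠ v ∧ v ∈ H.verts ∧ H.neighborSet v = {a, b} ∧
    K.verts = H.verts \ {v} ∧
    ∀ x y : V, K.Adj x y ↔ ((H.Adj x y ∧ x ≠ v ∧ y ≠ v) ∨ (x = a ∧ y = b) ∨ (x = b ∧ y = a))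

/-- `K` (a graph on a subset of the vertices of `G`) is a topological minor of `G`:
it is obtained from a subgraph of `G` by repeatedly smoothing degree-2 vertices. -/
def IsTopMinor (K : SimpleGraph.Subgraph (⊤ : SimpleGraph V)) (G : SimpleGraph V) : Prop :=
  ∃ H₀ : SimpleGraph.Subgraph (⊤ : SimpleGraph V),
    (∀ ⦃x y : V⦄, H₀.Adj x y → G.Adj x y) ∧ Relation.ReflTransGen SmoothStep H₀ K

/-- An abstract graph `H` is a topological minor of `G` if it is isomorphic to some
topological minor of `G`. -/
def IsTopMinorGraph {W : Type*} (H : SimpleGraph W) (G : SimpleGraph V) : Prop :=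
  ∃ K : SimpleGraph.Subgraph (⊤ : SimpleGraph V), IsTopMinor K G ∧ Nonempty (H ≃g K.coe)

/-- One edge-contraction step: `K` is obtained from `H` by contracting the edge `{a, b}`
(the vertex `b` is merged into `a`). -/
def ContractStep (H K : SimpleGraph.Subgraph (⊤ : SimpleGraph V)) : Prop :=
  ∃ a b : V, H.Adj a b ∧ K.verts = H.verts \ {b} ∧
    ∀ x y : V, K.Adj x y ↔ (x ≠ b ∧ y ≠ b ∧ x ≠ y ∧
      (H.Adj x y ∨ (x = a ∧ H.Adj b y) ∨ (y = a ∧ H.Adj x b)))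

/-- `G` contains `Hpat` as a minor: some graph obtained from a subgraph of `G` by
contracting edges is isomorphic to `Hpat`. -/
def HasMinor {W : Type*} (G : SimpleGraph V) (Hpat : SimpleGraph W) : Prop :=
  ∃ H₀ K : SimpleGraph.Subgraph (⊤ : SimpleGraph V),
    (∀ ⦃x y : V⦄, H₀.Adj x y → G.Adj x y) ∧ Relation.ReflTransGen ContractStep H₀ K ∧
      Nonempty (Hpat ≃g K.coe)

/-- Planarity, via Wagner's theorem: no `K₅`-minor and no `K₃,₃`-minor. -/
def IsPlanar (G : SimpleGraph V) : Prop :=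
  ¬ HasMinor G (completeGraph (Fin 5)) ∧ ¬ HasMinor G (completeBipartiteGraph (Fin 3) (Fin 3))

/-- A graph is triconnected if removing fewer than three vertices cannot disconnect it. -/
def Triconnected (G : SimpleGraph V) : Prop :=
  ∀ S : Set V, S.ncard < 3 → (G.induce Sᶜ).Preconnected

/-- A graph is claw-free if it has no induced `K_{1,3}`. -/
def ClawFree (G : SimpleGraph V) : Prop :=
  ∀ v a b c : V, G.Adj v a → G.Adj v b → G.Adj v c → a ≠ b → a ≠ c → b ≠ c →
    ¬ G.Adj a b → ¬ G.Adj a c → G.Adj b c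

/-- The graph `C'` obtained from `G[V(C) ∪ {u, v}]` by adding the edge `{u, v}`
if it is absent. -/
def CPrime (G : SimpleGraph V) (C : Set V) (u v : V) : SimpleGraph ↥(C ∪ {u, v}) :=
  SimpleGraph.fromRel (fun a b => G.Adj a b ∨ ((a : V) = u ∧ (b : V) = v))

/-!
Since `{u, v}` separates `G`, some vertex `x` of `G - {u, v}` lies outside `C`. Neither `u` nor
`v` is a cut vertex, so each of them has a neighbour in the component of `x`; hence there is a
`u`–`v` path whose inner vertices lie in that component and so avoid `C ∪ {u, v}`. Taking
`G[C ∪ {u, v}]` together with this path and smoothing the inner vertices of the path one at a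
time leaves exactly `G[C ∪ {u, v}] + uv = C'`.
-/

open Walk

lemma smoothStep_sup_toSubgraph_cons_cons (H : (⊤ : SimpleGraph V).Subgraph) {u w w' v : V}
    (huw : (⊤ : SimpleGraph V).Adj u w) (hww' : (⊤ : SimpleGraph V).Adj w w')
    (huw' : (⊤ : SimpleGraph V).Adj u w') (r : (⊤ : SimpleGraph V).Walk w' v)
    (hwH : w ∉ H.verts) (hwr : w ∉ r.support) :
    SmoothStep (H ⊔ (cons huw (cons hww' r)).toSubgraph) (H ⊔ (cons huw' r).toSubgraph) := by
  have hH : ∀ x y, H.Adj x y → x ≠ w ∧ y ≠ w := fun _ _ h =>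
    ⟨fun e => hwH (e ▸ h.fst_mem), fun e => hwH (e ▸ h.snd_mem)⟩
  have hr : ∀ x y, s(x, y) ∈ r.edges → x ≠ w ∧ y ≠ w := fun _ _ h =>
    ⟨fun e => hwr (e ▸ r.fst_mem_support_of_mem_edges h),
      fun e => hwr (e ▸ r.snd_mem_support_of_mem_edges h)⟩
  have huw_ne : u ≠ w := huw
  have hww'_ne : w ≠ w' := hww'
  refine ⟨w, u, w', huw', huw.ne, hww'.ne.symm, by simp, ?_, ?_, fun x y => ?_⟩
  · ext x
    simp only [Subgraph.mem_neighborSet, Subgraph.sup_adj, adj_toSubgraph_iff_mem_edges,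
      edges_cons, List.mem_cons, Set.mem_insert_iff, Set.mem_singleton_iff]
    grind
  · ext x
    simp only [Subgraph.verts_sup, verts_toSubgraph, support_cons]
    have hw'r := r.start_mem_support
    grind
  · simp only [Subgraph.sup_adj, adj_toSubgraph_iff_mem_edges, edges_cons, List.mem_cons]
    grind

lemma reflTransGen_smoothStep_sup_toSubgraph (H : (⊤ : SimpleGraph V).Subgraph) {u v : V}
    (huv : (⊤ : SimpleGraph V).Adj u v) {w : V} (huw : (⊤ : SimpleGraph V).Adj u w)
    (q : (⊤ : SimpleGraph V).Walk w v) (hq : (cons huw q).IsPath)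
    (hqH : ∀ z ∈ q.support, z ≠ v → z ∉ H.verts) :
    Relation.ReflTransGen SmoothStep (H ⊔ (cons huw q).toSubgraph)
      (H ⊔ (⊤ : SimpleGraph V).subgraphOfAdj huv) := by
  induction q with
  | nil => rw [toSubgraph_cons_nil_eq_subgraphOfAdj]
  | @cons w w' v hww' r ih =>
    have hwr : w ∉ r.support := ((cons_isPath_iff _ _).mp hq.of_cons).2
    have hur : u ∉ r.support := fun h => ((cons_isPath_iff _ _).mp hq).2 (by simp [h])
    have huw' : (⊤ : SimpleGraph V).Adj u w' := fun h => hur (h ▸ r.start_mem_support)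
    refine .head (smoothStep_sup_toSubgraph_cons_cons H huw hww' huw' r
      (hqH w (by simp) fun h => hwr (h ▸ r.end_mem_support)) hwr) (ih huv huw' ?_ ?_)
    · exact (cons_isPath_iff _ _).mpr ⟨hq.of_cons.of_cons, hur⟩
    · exact fun z hz => hqH z (by simp [hz])

lemma isTopMinor_sup_subgraphOfAdj {G : SimpleGraph V} {H : (⊤ : SimpleGraph V).Subgraph}
    (hHG : ∀ ⦃x y⦄, H.Adj x y → G.Adj x y) {u v : V} (huv : (⊤ : SimpleGraph V).Adj u v)
    (p : G.Walk u v) (hp : p.IsPath) (hpH : ∀ z ∈ p.support, z ≠ u → z ≠ v → z ∉ H.verts) :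
    IsTopMinor (H ⊔ (⊤ : SimpleGraph V).subgraphOfAdj huv) G := by
  refine ⟨H ⊔ (p.mapLe le_top).toSubgraph, ?_, ?_⟩
  · rintro x y (h | h)
    · exact hHG h
    · exact ((adj_toSubgraph_mapLe le_top).mp h).adj_sub
  · cases p with
    | nil => exact absurd rfl huv
    | cons h r =>
      have hur : u ∉ r.support := ((cons_isPath_iff _ _).mp hp).2
      refine reflTransGen_smoothStep_sup_toSubgraph H huv h.ne (r.mapLe le_top) (hp.mapLe le_top)
        fun z hz hzv => ?_
      rw [support_mapLe_eq_support] at hz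
      exact hpH z (by simp [hz]) (by rintro rfl; exact hur hz) hzv

namespace ReachIn

variable {G : SimpleGraph V} {W : Set V} {x y z : V}

lemma refl (hx : x ∈ W) : ReachIn G W x x :=
  ⟨hx, hx, Reachable.refl _⟩

lemma symm (h : ReachIn G W x y) : ReachIn G W y x :=
  let ⟨hx, hy, h⟩ := h; ⟨hy, hx, h.symm⟩

lemma trans (hxy : ReachIn G W x y) (hyz : ReachIn G W y z) : ReachIn G W x z :=
  let ⟨hx, _, hxy⟩ := hxy; let ⟨_, hz, hyz⟩ := hyz; ⟨hx, hz, hxy.trans hyz⟩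

lemma of_adj (hx : x ∈ W) (hy : y ∈ W) (h : G.Adj x y) : ReachIn G W x y :=
  ⟨hx, hy, Adj.reachable (G := G.induce W) h⟩

lemma mono {W' : Set V} (hW : W ⊆ W') (h : ReachIn G W x y) : ReachIn G W' x y :=
  let ⟨hx, hy, h⟩ := h; ⟨hW hx, hW hy, h.map (G.induceHomOfLE hW).toHom⟩

lemma mem_right (h : ReachIn G W x y) : y ∈ W := h.2.1

lemma mem_of_closed {P : Set V} (hP : ∀ a ∈ P, ∀ b ∈ W, G.Adj a b → b ∈ P) (hx : x ∈ P)
    (h : ReachIn G W x y) : y ∈ P := by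
  obtain ⟨hxW, hyW, h⟩ := h
  suffices ∀ b, Relation.ReflTransGen (G.induce W).Adj ⟨x, hxW⟩ b → (b : V) ∈ P from
    this _ ((reachable_iff_reflTransGen _ _).mp h)
  intro b hb
  induction hb with
  | refl => exact hx
  | tail _ hab ih => exact hP _ ih _ (Subtype.prop _) hab

lemma exists_walk (h : ReachIn G W x y) :
    ∃ p : G.Walk x y, ∀ z ∈ p.support, ReachIn G W x z := by
  classical
  obtain ⟨hx, hy, ⟨q⟩⟩ := h
  refine ⟨q.map (Embedding.induce W).toHom, fun z hz => ?_⟩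
  obtain ⟨z', hz', rfl⟩ := List.mem_map.mp (by rwa [← Walk.support_map])
  exact ⟨hx, z'.2, ⟨q.takeUntil z' hz'⟩⟩

end ReachIn

lemma IsCompOf.notMem_of_reachIn {G : SimpleGraph V} {C W : Set V} (hC : IsCompOf G C W)
    {x y : V} (hx : x ∉ C) (h : ReachIn G W x y) : y ∉ C :=
  fun hy => hx (h.symm.mem_of_closed hC.2.2 hy)

lemma Separates.exists_notMem_of_isCompOf {G : SimpleGraph V} {S C : Set V}
    (hS : Separates G S) (hC : IsCompOf G C Sᶜ) : ∃ x ∉ S, x ∉ C := by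
  obtain ⟨x, y, hx, hy, -, hxy⟩ := hS
  by_contra! h
  exact hxy (ReachIn.mono hC.1 ⟨h x hx, h y hy, hC.2.1.preconnected _ _⟩)

/-- Otherwise the component of `x` in `G - {u, v}` would be cut off from `u` by `v` alone. -/
lemma exists_adj_reachIn_of_not_separates {G : SimpleGraph V} (hconn : G.Connected) {u v : V}
    (hv : ¬ Separates G {v}) (huv : u ≠ v) {x : V} (hx : x ∉ ({u, v} : Set V)) :
    ∃ a, ReachIn G {u, v}ᶜ x a ∧ G.Adj u a := by
  by_contra! hno
  have hclosed : ∀ a ∈ {a | ReachIn G {u, v}ᶜ x a}, ∀ b ∈ ({v} : Set V)ᶜ, G.Adj a b →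
      b ∈ {a | ReachIn G {u, v}ᶜ x a} := by
    intro a ha b hb hab
    have hbu : b ≠ u := by rintro rfl; exact hno a ha hab.symm
    exact ha.trans (.of_adj ha.mem_right (by simp_all) hab)
  refine hv ⟨x, u, by simp_all, by simpa using huv, hconn.preconnected x u, fun hxu => ?_⟩
  exact (hxu.mem_of_closed hclosed (ReachIn.refl hx)).mem_right (by simp)

lemma exists_isPath_reachIn_of_not_separates {G : SimpleGraph V} (hconn : G.Connected)
    (hnocut : ∀ w : V, ¬ Separates G {w}) {u v : V} (huv : u ≠ v) {x : V}
    (hx : x ∉ ({u, v} : Set V)) :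
    ∃ p : G.Walk u v, p.IsPath ∧ ∀ z ∈ p.support, z ≠ u → z ≠ v → ReachIn G {u, v}ᶜ x z := by
  classical
  obtain ⟨a, hxa, hua⟩ := exists_adj_reachIn_of_not_separates hconn (hnocut v) huv hx
  obtain ⟨b, hxb, hvb⟩ := exists_adj_reachIn_of_not_separates hconn (hnocut u) huv.symm
    (by rwa [Set.pair_comm])
  rw [Set.pair_comm] at hxb
  obtain ⟨q, hq⟩ := (hxa.symm.trans hxb).exists_walk
  let p := cons hua (q.concat hvb.symm)
  refine ⟨p.bypass, p.bypass_isPath, fun z hz hzu hzv => ?_⟩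
  have hz : z = u ∨ z ∈ q.support ∨ z = v := by
    simpa [p, support_concat] using p.support_bypass_subset_support hz
  obtain rfl | hz | rfl := hz
  · exact absurd rfl hzu
  · exact hxa.trans (hq z hz)
  · exact absurd rfl hzv

lemma CPrime.nonempty_iso_coe (G : SimpleGraph V) (C : Set V) {u v : V} (huv : u ≠ v) :
    Nonempty (CPrime G C u v ≃g
      ((toSubgraph G le_top).induce (C ∪ {u, v}) ⊔ (⊤ : SimpleGraph V).subgraphOfAdj huv).coe) := by
  have hverts : C ∪ {u, v} =
      ((toSubgraph G le_top).induce (C ∪ {u, v}) ⊔ (⊤ : SimpleGraph V).subgraphOfAdj huv).verts := by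
    simp
  refine ⟨⟨Equiv.setCongr hverts, fun {a b} => ?_⟩⟩
  obtain ⟨a, ha⟩ := a
  obtain ⟨b, hb⟩ := b
  simp only [CPrime, fromRel_adj, Equiv.setCongr_apply, Subgraph.coe_adj, Subgraph.sup_adj,
    Subgraph.induce_adj, subgraphOfAdj_adj, toSubgraph_adj, ne_eq, Subtype.mk.injEq, Sym2.eq_iff,
    G.adj_comm b a]
  have hab := G.ne_of_adj (a := a) (b := b)
  grind

theorem CPrime_topMinor_general (G : SimpleGraph V)
    (hconn : G.Connected) (hnocut : ∀ w : V, ¬ Separates G {w})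
    (u v : V) (huv : u ≠ v) (hsp : Separates G {u, v})
    (C : Set V) (hC : IsCompOf G C {u, v}ᶜ) :
    IsTopMinorGraph (CPrime G C u v) G := by
  obtain ⟨x, hxuv, hxC⟩ := hsp.exists_notMem_of_isCompOf hC
  obtain ⟨p, hp, hpx⟩ := exists_isPath_reachIn_of_not_separates hconn hnocut huv hxuv
  refine ⟨_, isTopMinor_sup_subgraphOfAdj (H := (toSubgraph G le_top).induce (C ∪ {u, v}))
    (fun _ _ h => h.2.2) huv p hp fun z hz hzu hzv => ?_, CPrime.nonempty_iso_coe G C huv⟩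
  have hxz := hpx z hz hzu hzv
  simpa [hzu, hzv] using hC.notMem_of_reachIn hxC hxz

/-- For a connected graph without cut vertices with separation pair `{u, v}` and a
component `C` of `G - {u, v}`, the graph `C'` is a topological minor of `G`. -/
theorem CPrime_topMinor [Fintype V] (G : SimpleGraph V)
    (hconn : G.Connected) (hnocut : ∀ w : V, ¬ Separates G {w})
    (u v : V) (huv : u ≠ v) (hsp : Separates G {u, v})
    (C : Set V) (hC : IsCompOf G C {u, v}ᶜ) :
    IsTopMinorGraph (CPrime G C u v) G :=
  CPrime_topMinor_general G hconn hnocut u v huv hsp C hC
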